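/- In the seminal-curve recursion, for every N ≥ 1 one has E[Y_N³/(G_N · S_N)] ≤ 2 · 6^{−(N−1)}. -/

import Mathlib

/-!
Write `Y_N = (1 - V) Γ ∏_{k ≤ N} (1 - √U_k)`. Since
`G_N S_N = G_{N-1} S_N + Y_{N-1} √U_N ≥ Y_{N-1} √U_N` (all quantities being a.s. positive),
`Y_N³ / (G_N S_N) ≤ Y_{N-1}² (1 - √U_N)³ / √U_N
  = Γ² (1 - V)² ∏_{k < N} (1 - √U_k)² · (1 - √U_N)³ / √U_N`.
The right-hand side is a product of independent factors with means
`E[Γ²] = 4`, `E[(1 - V)²] = 1/3`, `E[(1 - √U)²] = 1/6` and `E[(1 - √U)³ / √U] = 1/2`,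
so its expectation is `(2/3) · 6^{-(N-1)}`.
-/

open MeasureTheory ProbabilityTheory Filter

/-- The σ-algebra `F n` generated by `Γ`, `V`, and `U_1, …, U_n`, `E_1, …, E_n`.
(Here the random variables `U i`, `E i` of the Lean formalization, for `i < n`,
represent the mathematical `U_{i+1}`, `E_{i+1}`: the indexing is shifted by one.) -/
def seminalFiltration {Ω : Type*} [MeasurableSpace Ω] (U E : ℕ → Ω → ℝ) (Γ V : Ω → ℝ)
    (n : ℕ) : MeasurableSpace Ω :=
  MeasurableSpace.comap Γ inferInstance ⊔ MeasurableSpace.comap V inferInstance ⊔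
    ⨆ i < n, (MeasurableSpace.comap (U i) inferInstance ⊔
      MeasurableSpace.comap (E i) inferInstance)

open Set

section UnitInterval

lemma image_sq_Icc_zero_one : (fun t : ℝ => t ^ 2) '' Icc 0 1 = Icc 0 1 := by
  ext x
  constructor
  · rintro ⟨t, ⟨ht0, ht1⟩, rfl⟩
    exact ⟨by positivity, pow_le_one₀ ht0 ht1⟩
  · rintro ⟨hx0, hx1⟩
    exact ⟨√x, ⟨Real.sqrt_nonneg x, Real.sqrt_le_one.2 hx1⟩, Real.sq_sqrt hx0⟩

lemma hasDerivWithinAt_sq_Icc_zero_one :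
    ∀ t ∈ Icc (0:ℝ) 1, HasDerivWithinAt (fun t : ℝ => t ^ 2) (2 * t) (Icc 0 1) t :=
  fun t _ => by simpa using (hasDerivAt_pow 2 t).hasDerivWithinAt

lemma injOn_sq_Icc_zero_one : InjOn (fun t : ℝ => t ^ 2) (Icc 0 1) :=
  (pow_left_strictMonoOn₀ (M₀ := ℝ) two_ne_zero).injOn.mono Icc_subset_Ici_self

lemma abs_two_mul_smul_comp_sqrt_sq_eqOn {g : ℝ → ℝ} :
    EqOn (fun t => |2 * t| • g (√(t ^ 2))) (fun t => 2 * t * g t) (Icc 0 1) := by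
  intro t ht
  simp [abs_of_nonneg ht.1, Real.sqrt_sq ht.1]

lemma integral_comp_sqrt_Icc_zero_one (g : ℝ → ℝ) :
    ∫ x in Icc 0 1, g √x = ∫ t in Icc 0 1, 2 * t * g t := by
  conv_lhs => rw [← image_sq_Icc_zero_one]
  rw [integral_image_eq_integral_abs_deriv_smul measurableSet_Icc
    hasDerivWithinAt_sq_Icc_zero_one injOn_sq_Icc_zero_one]
  exact setIntegral_congr_fun measurableSet_Icc abs_two_mul_smul_comp_sqrt_sq_eqOn

lemma integrableOn_comp_sqrt_Icc_zero_one_iff (g : ℝ → ℝ) :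
    IntegrableOn (fun x => g √x) (Icc 0 1) ↔ IntegrableOn (fun t => 2 * t * g t) (Icc 0 1) := by
  rw [← image_sq_Icc_zero_one, integrableOn_image_iff_integrableOn_abs_deriv_smul
    measurableSet_Icc hasDerivWithinAt_sq_Icc_zero_one injOn_sq_Icc_zero_one, image_sq_Icc_zero_one]
  exact integrableOn_congr_fun abs_two_mul_smul_comp_sqrt_sq_eqOn measurableSet_Icc

lemma two_mul_mul_pow_three_div_eqOn :
    EqOn (fun t : ℝ => 2 * t * ((1 - t) ^ 3 / t)) (fun t => 2 * (1 - t) ^ 3) (Ioc 0 1) := by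
  intro t ht
  field_simp [ht.1.ne']

lemma integrableOn_one_sub_sqrt_pow_three_div_sqrt :
    IntegrableOn (fun x => (1 - √x) ^ 3 / √x) (Icc 0 1) := by
  rw [integrableOn_comp_sqrt_Icc_zero_one_iff fun t => (1 - t) ^ 3 / t,
    integrableOn_Icc_iff_integrableOn_Ioc,
    integrableOn_congr_fun two_mul_mul_pow_three_div_eqOn measurableSet_Ioc]
  exact (by fun_prop : Continuous fun t : ℝ => 2 * (1 - t) ^ 3).integrableOn_Ioc

lemma integral_one_sub_sqrt_pow_three_div_sqrt :
    ∫ x in Icc 0 1, (1 - √x) ^ 3 / √x = 1 / 2 := by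
  rw [integral_comp_sqrt_Icc_zero_one fun t => (1 - t) ^ 3 / t, integral_Icc_eq_integral_Ioc,
    setIntegral_congr_fun measurableSet_Ioc two_mul_mul_pow_three_div_eqOn,
    ← intervalIntegral.integral_of_le zero_le_one]
  simp [intervalIntegral.integral_comp_sub_left fun t => t ^ 3]
  norm_num

lemma integral_one_sub_sqrt_sq : ∫ x in Icc 0 1, (1 - √x) ^ 2 = 1 / 6 := by
  have hsplit : ∀ t : ℝ, 2 * t * (1 - t) ^ 2 = 2 * (1 - t) ^ 2 - 2 * (1 - t) ^ 3 :=
    fun t => by ring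
  rw [integral_comp_sqrt_Icc_zero_one fun t => (1 - t) ^ 2, integral_Icc_eq_integral_Ioc,
    ← intervalIntegral.integral_of_le zero_le_one]
  simp only [hsplit]
  rw [intervalIntegral.integral_sub ((by fun_prop : Continuous _).intervalIntegrable _ _)
    ((by fun_prop : Continuous _).intervalIntegrable _ _)]
  simp [intervalIntegral.integral_comp_sub_left fun t => t ^ 3,
    intervalIntegral.integral_comp_sub_left fun t => t ^ 2]
  norm_num

lemma integral_one_sub_sq : ∫ x in Icc (0:ℝ) 1, (1 - x) ^ 2 = 1 / 3 := by
  rw [integral_Icc_eq_integral_Ioc, ← intervalIntegral.integral_of_le zero_le_one]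
  simp [intervalIntegral.integral_comp_sub_left fun t => t ^ 2]
  norm_num

end UnitInterval

lemma pow_three_div_mul_le {y s g t : ℝ} (hy : 0 < y) (hs : 0 < s) (hg : 0 ≤ g) (ht0 : 0 < t)
    (ht1 : t ≤ 1) : (y * (1 - t)) ^ 3 / ((g + y / s * t) * s) ≤ y ^ 2 * ((1 - t) ^ 3 / t) :=
  calc (y * (1 - t)) ^ 3 / ((g + y / s * t) * s)
      = (y * (1 - t)) ^ 3 / (g * s + y * t) := by field_simp
    _ ≤ (y * (1 - t)) ^ 3 / (y * t) := by
      have : 0 ≤ 1 - t := sub_nonneg.2 ht1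
      gcongr
      exact le_add_of_nonneg_left (mul_nonneg hg hs.le)
    _ = y ^ 2 * ((1 - t) ^ 3 / t) := by field_simp

structure IsSeminalRecursion (u e y s g : ℕ → ℝ) : Prop where
  y_succ : ∀ k, y (k + 1) = y k * (1 - √(u k))
  inv_s_succ : ∀ k, 1 / s (k + 1) = 1 / s k + 4 / y k ^ 2 * e k
  g_succ : ∀ k, g (k + 1) = g k + y k / s (k + 1) * √(u k)

namespace IsSeminalRecursion

variable {u e y s g : ℕ → ℝ}

lemma y_eq_mul_prod (h : IsSeminalRecursion u e y s g) (m : ℕ) :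
    y m = y 0 * ∏ k ∈ Finset.range m, (1 - √(u k)) := by
  induction m with
  | zero => simp
  | succ m ih => rw [h.y_succ, ih, Finset.prod_range_succ, mul_assoc]

lemma y_pos (h : IsSeminalRecursion u e y s g) (hu : ∀ k, u k < 1) (hy0 : 0 < y 0) (m : ℕ) :
    0 < y m := by
  induction m with
  | zero => exact hy0
  | succ m ih =>
    rw [h.y_succ]
    exact mul_pos ih (sub_pos.2 ((Real.sqrt_lt' one_pos).2 (by simpa using hu m)))

lemma s_pos (h : IsSeminalRecursion u e y s g) (he : ∀ k, 0 ≤ e k) (hs0 : 0 < s 0) (m : ℕ) :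
    0 < s m := by
  induction m with
  | zero => exact hs0
  | succ m ih =>
    have : 0 < 1 / s (m + 1) := by
      rw [h.inv_s_succ]
      have := he m
      positivity
    simpa using this

lemma g_nonneg (h : IsSeminalRecursion u e y s g) (hu : ∀ k, u k < 1) (he : ∀ k, 0 ≤ e k)
    (hy0 : 0 < y 0) (hs0 : 0 < s 0) (hg0 : 0 ≤ g 0) (m : ℕ) : 0 ≤ g m := by
  induction m with
  | zero => exact hg0
  | succ m ih =>
    rw [h.g_succ]
    have := h.y_pos hu hy0 m
    have := h.s_pos he hs0 (m + 1)
    positivity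

lemma pow_three_div_le (h : IsSeminalRecursion u e y s g) (hu : ∀ k, u k ∈ Ioo 0 1)
    (he : ∀ k, 0 ≤ e k) (hy0 : 0 < y 0) (hs0 : 0 < s 0) (hg0 : 0 ≤ g 0) (n : ℕ) :
    y (n + 1) ^ 3 / (g (n + 1) * s (n + 1)) ≤
      y 0 ^ 2 * (∏ k ∈ Finset.range n, (1 - √(u k)) ^ 2) * ((1 - √(u n)) ^ 3 / √(u n)) := by
  have hu1 : ∀ k, u k < 1 := fun k => (hu k).2
  rw [h.y_succ, h.g_succ, Finset.prod_pow, ← mul_pow, ← h.y_eq_mul_prod]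
  exact pow_three_div_mul_le (h.y_pos hu1 hy0 n) (h.s_pos he hs0 _)
    (h.g_nonneg hu1 he hy0 hs0 hg0 n) (Real.sqrt_pos.2 (hu n).1) (Real.sqrt_le_one.2 (hu n).2.le)

lemma pow_three_div_nonneg (h : IsSeminalRecursion u e y s g) (hu : ∀ k, u k < 1)
    (he : ∀ k, 0 ≤ e k) (hy0 : 0 < y 0) (hs0 : 0 < s 0) (hg0 : 0 ≤ g 0) (m : ℕ) :
    0 ≤ y m ^ 3 / (g m * s m) := by
  have := h.y_pos hu hy0 m
  have := h.s_pos he hs0 m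
  have := h.g_nonneg hu he hy0 hs0 hg0 m
  positivity

end IsSeminalRecursion

namespace ProbabilityTheory

variable {Ω ι : Type*} [MeasurableSpace Ω] {μ : Measure Ω} {X : ι → Ω → ℝ}

lemma iIndepFun.integrable_finsetProd (hX : iIndepFun X μ) (hXm : ∀ i, AEMeasurable (X i) μ)
    {s : Finset ι} (hint : ∀ i ∈ s, Integrable (X i) μ) : Integrable (∏ i ∈ s, X i) μ := by
  classical
  have := hX.isProbabilityMeasure
  induction s using Finset.induction_on with
  | empty => exact integrable_const 1
  | insert a s ha ih =>
    rw [Finset.prod_insert ha, mul_comm]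
    exact (hX.indepFun_finsetProd_of_notMem₀ hXm ha).integrable_mul
      (ih fun i hi => hint i (Finset.mem_insert_of_mem hi)) (hint a (Finset.mem_insert_self a s))

lemma iIndepFun.integral_finsetProd (hX : iIndepFun X μ) (hXm : ∀ i, AEMeasurable (X i) μ)
    (s : Finset ι) : μ[∏ i ∈ s, X i] = ∏ i ∈ s, μ[X i] := by
  classical
  have := hX.isProbabilityMeasure
  induction s using Finset.induction_on with
  | empty => simp
  | insert a s ha ih =>
    rw [Finset.prod_insert ha, Finset.prod_insert ha, ← ih]
    exact (hX.indepFun_finsetProd_of_notMem₀ hXm ha).symm.integral_mul_eq_mul_integral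
      (hXm a).aestronglyMeasurable
      (Finset.aemeasurable_prod s fun i _ => hXm i).aestronglyMeasurable

end ProbabilityTheory

section Rayleigh

variable {Ω : Type*} [MeasurableSpace Ω]

def HasRayleighTail (μ : Measure Ω) (Γ : Ω → ℝ) (c : ℝ) : Prop :=
  ∀ γ : ℝ, 0 ≤ γ → μ {ω | Γ ω > γ} = ENNReal.ofReal (Real.exp (-(γ ^ 2) / c))

variable {μ : Measure Ω} [IsProbabilityMeasure μ] {Γ : Ω → ℝ} {c : ℝ}

lemma HasRayleighTail.ae_pos (hΓ : HasRayleighTail μ Γ c) (hΓm : Measurable Γ) :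
    ∀ᵐ ω ∂μ, 0 < Γ ω := by
  have h0 : μ {ω | Γ ω > 0} = 1 := by simpa using hΓ 0 le_rfl
  rwa [ae_iff, ← compl_ofPred, prob_compl_eq_zero_iff (measurableSet_lt measurable_const hΓm)]

lemma HasRayleighTail.lintegral_sq (hΓ : HasRayleighTail μ Γ c) (hc : 0 < c)
    (hΓm : Measurable Γ) :
    ∫⁻ ω, ENNReal.ofReal (Γ ω ^ 2) ∂μ = ENNReal.ofReal c := by
  have hpos := hΓ.ae_pos hΓm
  have htail : ∀ t ∈ Ioi (0 : ℝ), μ {ω | t < Γ ω ^ 2} = ENNReal.ofReal (Real.exp ((-c⁻¹) * t)) := by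
    intro t ht
    have hsqrt : {ω | t < Γ ω ^ 2} =ᵐ[μ] {ω | Γ ω > √t} := by
      filter_upwards [hpos] with ω hω
      simp only [eq_iff_iff]
      exact (Real.sqrt_lt' hω).symm
    rw [measure_congr hsqrt, hΓ _ (Real.sqrt_nonneg t), Real.sq_sqrt (le_of_lt ht)]
    congr 2
    field_simp
  rw [lintegral_eq_lintegral_meas_lt μ (ae_of_all _ fun ω => sq_nonneg (Γ ω))
      (hΓm.pow_const 2).aemeasurable, setLIntegral_congr_fun measurableSet_Ioi htail,
    ← ofReal_integral_eq_lintegral_ofReal (exp_neg_integrableOn_Ioi 0 (inv_pos.2 hc))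
      (ae_of_all _ fun t => (Real.exp_pos _).le),
    integral_exp_mul_Ioi (neg_lt_zero.2 (inv_pos.2 hc))]
  simp

lemma HasRayleighTail.integrable_sq (hΓ : HasRayleighTail μ Γ c) (hc : 0 < c)
    (hΓm : Measurable Γ) :
    Integrable (fun ω => Γ ω ^ 2) μ := by
  refine ⟨(hΓm.pow_const 2).aestronglyMeasurable, ?_⟩
  rw [hasFiniteIntegral_iff_ofReal (ae_of_all _ fun ω => sq_nonneg (Γ ω)),
    hΓ.lintegral_sq hc hΓm]
  exact ENNReal.ofReal_lt_top

lemma HasRayleighTail.integral_sq (hΓ : HasRayleighTail μ Γ c) (hc : 0 < c)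
    (hΓm : Measurable Γ) :
    ∫ ω, Γ ω ^ 2 ∂μ = c := by
  rw [integral_eq_lintegral_of_nonneg_ae (ae_of_all _ fun ω => sq_nonneg (Γ ω))
    (hΓm.pow_const 2).aestronglyMeasurable, hΓ.lintegral_sq hc hΓm,
    ENNReal.toReal_ofReal hc.le]

end Rayleigh

section Transfer

variable {Ω : Type*} [MeasurableSpace Ω] {μ : Measure Ω} {W : Ω → ℝ} {s : Set ℝ} {f : ℝ → ℝ}

lemma integrable_comp_of_map_eq_restrict (hWm : AEMeasurable W μ)
    (hW : μ.map W = volume.restrict s) (hf : Measurable f) (hfi : IntegrableOn f s) :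
    Integrable (fun ω => f (W ω)) μ :=
  (integrable_map_measure hf.aestronglyMeasurable hWm).1 (hW ▸ hfi)

lemma integral_comp_of_map_eq_restrict (hWm : AEMeasurable W μ)
    (hW : μ.map W = volume.restrict s) (hf : Measurable f) :
    ∫ ω, f (W ω) ∂μ = ∫ x in s, f x := by
  rw [← hW, integral_map hWm hf.aestronglyMeasurable]

lemma ae_mem_Ioo_of_map_eq_restrict_Icc {a b : ℝ} (hWm : AEMeasurable W μ)
    (hW : μ.map W = volume.restrict (Icc a b)) : ∀ᵐ ω ∂μ, W ω ∈ Ioo a b := by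
  refine ae_of_ae_map hWm ?_
  rw [hW, ← Measure.restrict_congr_set Ioo_ae_eq_Icc]
  exact ae_restrict_mem measurableSet_Ioo

lemma ae_nonneg_of_map_eq_expMeasure {r : ℝ} (hWm : AEMeasurable W μ)
    (hW : μ.map W = expMeasure r) : ∀ᵐ ω ∂μ, 0 ≤ W ω := by
  refine ae_of_ae_map hWm ?_
  rw [hW, ae_iff]
  simp only [not_le]
  change expMeasure r (Iio 0) = 0
  rw [expMeasure, gammaMeasure, withDensity_apply _ measurableSet_Iio]
  exact lintegral_gammaPDF_of_nonpos le_rfl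

end Transfer

section Dominating

variable {Ω : Type*}

-- The `E`-coordinates are not in `seminalIndex n`, so their weight is immaterial.
noncomputable def seminalWeight (n : ℕ) : ℕ ⊕ ℕ ⊕ Bool → ℝ → ℝ :=
  Sum.elim (fun k x => if k = n then (1 - √x) ^ 3 / √x else (1 - √x) ^ 2)
    (Sum.elim (fun _ _ => 1) fun b x => bif b then x ^ 2 else (1 - x) ^ 2)

def seminalIndex (n : ℕ) : Finset (ℕ ⊕ ℕ ⊕ Bool) :=
  (Finset.range (n + 1)).disjSum ((∅ : Finset ℕ).disjSum Finset.univ)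

def seminalFamily (U E : ℕ → Ω → ℝ) (Γ V : Ω → ℝ) : ℕ ⊕ ℕ ⊕ Bool → Ω → ℝ :=
  Sum.elim U (Sum.elim E fun b : Bool => bif b then Γ else V)

noncomputable def seminalBound (U : ℕ → Ω → ℝ) (Γ V : Ω → ℝ) (n : ℕ) (ω : Ω) : ℝ :=
  ((1 - V ω) * Γ ω) ^ 2 * (∏ k ∈ Finset.range n, (1 - √(U k ω)) ^ 2) *
    ((1 - √(U n ω)) ^ 3 / √(U n ω))

lemma measurable_seminalWeight (n : ℕ) (i : ℕ ⊕ ℕ ⊕ Bool) : Measurable (seminalWeight n i) := by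
  rcases i with k | k | (_ | _) <;>
    simp only [seminalWeight, Sum.elim_inl, Sum.elim_inr, cond_true, cond_false]
  · split_ifs <;> fun_prop
  all_goals fun_prop

lemma measurable_seminalFamily [MeasurableSpace Ω] {U E : ℕ → Ω → ℝ} {Γ V : Ω → ℝ}
    (hUm : ∀ n, Measurable (U n)) (hEm : ∀ n, Measurable (E n)) (hΓm : Measurable Γ)
    (hVm : Measurable V) (i : ℕ ⊕ ℕ ⊕ Bool) : Measurable (seminalFamily U E Γ V i) := by
  rcases i with k | k | (_ | _)
  exacts [hUm k, hEm k, hVm, hΓm]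

lemma seminalBound_eq_prod (U E : ℕ → Ω → ℝ) (Γ V : Ω → ℝ) (n : ℕ) :
    seminalBound U Γ V n =
      ∏ i ∈ seminalIndex n, seminalWeight n i ∘ seminalFamily U E Γ V i := by
  ext ω
  simp [seminalBound, seminalIndex, seminalWeight, seminalFamily, Finset.prod_disjSum,
    Finset.prod_range_succ, Finset.prod_ite_of_false fun k hk => (Finset.mem_range.1 hk).ne]
  ring

variable [MeasurableSpace Ω] {μ : Measure Ω} [IsProbabilityMeasure μ]
  {U E : ℕ → Ω → ℝ} {Γ V : Ω → ℝ} {c : ℝ}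

lemma integrable_seminalBound (hc : 0 < c) (hUm : ∀ n, Measurable (U n))
    (hEm : ∀ n, Measurable (E n)) (hΓm : Measurable Γ) (hVm : Measurable V)
    (hU : ∀ n, μ.map (U n) = volume.restrict (Icc 0 1)) (hV : μ.map V = volume.restrict (Icc 0 1))
    (hΓ : HasRayleighTail μ Γ c)
    (hindep : iIndepFun (seminalFamily U E Γ V) μ) (n : ℕ) :
    Integrable (seminalBound U Γ V n) μ := by
  rw [seminalBound_eq_prod U E Γ V n]
  refine (hindep.comp _ (measurable_seminalWeight n)).integrable_finsetProd
    (fun i => ((measurable_seminalWeight n i).comp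
      (measurable_seminalFamily hUm hEm hΓm hVm i)).aemeasurable) ?_
  rintro (k | k | (_ | _)) hi <;> simp only [seminalIndex, Finset.inl_mem_disjSum,
    Finset.inr_mem_disjSum, Finset.notMem_empty] at hi
  · by_cases hk : k = n
    · simp only [Function.comp_def, seminalWeight, seminalFamily, Sum.elim_inl, hk, if_true]
      exact integrable_comp_of_map_eq_restrict (hUm n).aemeasurable (hU n) (by fun_prop)
        integrableOn_one_sub_sqrt_pow_three_div_sqrt
    · simp only [Function.comp_def, seminalWeight, seminalFamily, Sum.elim_inl, hk, if_false]
      exact integrable_comp_of_map_eq_restrict (hUm k).aemeasurable (hU k) (by fun_prop)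
        (by fun_prop : Continuous fun x : ℝ => (1 - √x) ^ 2).integrableOn_Icc
  · simp only [Function.comp_def, seminalWeight, seminalFamily, Sum.elim_inr, cond_false]
    exact integrable_comp_of_map_eq_restrict hVm.aemeasurable hV (by fun_prop)
      (by fun_prop : Continuous fun x : ℝ => (1 - x) ^ 2).integrableOn_Icc
  · exact hΓ.integrable_sq hc hΓm

lemma integral_seminalBound (hc : 0 < c) (hUm : ∀ n, Measurable (U n))
    (hEm : ∀ n, Measurable (E n)) (hΓm : Measurable Γ) (hVm : Measurable V)
    (hU : ∀ n, μ.map (U n) = volume.restrict (Icc 0 1)) (hV : μ.map V = volume.restrict (Icc 0 1))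
    (hΓ : HasRayleighTail μ Γ c)
    (hindep : iIndepFun (seminalFamily U E Γ V) μ) (n : ℕ) :
    ∫ ω, seminalBound U Γ V n ω ∂μ = (1 / 6) ^ n * (1 / 2) * (c * (1 / 3)) := by
  have hlt : ∀ k ∈ Finset.range n, ∫ ω, seminalWeight n (Sum.inl k) (U k ω) ∂μ = 1 / 6 := by
    intro k hk
    simp only [seminalWeight, Sum.elim_inl, if_neg (Finset.mem_range.1 hk).ne]
    rw [integral_comp_of_map_eq_restrict (hUm k).aemeasurable (hU k)
      (by fun_prop : Measurable fun x : ℝ => (1 - √x) ^ 2), integral_one_sub_sqrt_sq]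
  rw [seminalBound_eq_prod U E Γ V n,
    (hindep.comp _ (measurable_seminalWeight n)).integral_finsetProd
      (fun i => ((measurable_seminalWeight n i).comp
        (measurable_seminalFamily hUm hEm hΓm hVm i)).aemeasurable),
    seminalIndex, Finset.prod_disjSum, Finset.prod_range_succ]
  simp only [Function.comp_apply, seminalFamily, Sum.elim_inl]
  rw [Finset.prod_congr rfl hlt]
  simp [seminalWeight,
    integral_comp_of_map_eq_restrict (hUm n).aemeasurable (hU n)
      (by fun_prop : Measurable fun x : ℝ => (1 - √x) ^ 3 / √x),
    integral_one_sub_sqrt_pow_three_div_sqrt,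
    integral_comp_of_map_eq_restrict hVm.aemeasurable hV
      (by fun_prop : Measurable fun x : ℝ => (1 - x) ^ 2),
    integral_one_sub_sq, hΓ.integral_sq hc hΓm]

end Dominating

theorem seminal_curve_YcubedGS_bound
    {Ω : Type*} [MeasurableSpace Ω] (μ : Measure Ω) [IsProbabilityMeasure μ]
    -- the driving random variables: `U n`, `E n` represent the mathematical
    -- `U_{n+1}`, `E_{n+1}` (indexing shifted by one)
    (U E : ℕ → Ω → ℝ) (Γ V : Ω → ℝ) (Y S G : ℕ → Ω → ℝ)
    (hUm : ∀ n, Measurable (U n)) (hEm : ∀ n, Measurable (E n))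
    (hΓm : Measurable Γ) (hVm : Measurable V)
    -- each `U n` and `V` is uniformly distributed on `[0,1]`
    (hU : ∀ n, μ.map (U n) = volume.restrict (Set.Icc (0:ℝ) 1))
    (hV : μ.map V = volume.restrict (Set.Icc (0:ℝ) 1))
    -- each `E n` has the standard exponential distribution (rate 1)
    (hE : ∀ n, μ.map (E n) = expMeasure 1)
    -- `Γ` has the Rayleigh(√2) distribution: `P(Γ > γ) = exp (-γ²/4)` for `γ ≥ 0`
    (hΓ : ∀ γ : ℝ, 0 ≤ γ → μ {ω | Γ ω > γ} = ENNReal.ofReal (Real.exp (-(γ ^ 2) / 4)))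
    -- `(U n)`, `(E n)`, `Γ`, `V` are mutually independent
    (hindep : iIndepFun
      (Sum.elim U (Sum.elim E (fun b : Bool => bif b then Γ else V))) μ)
    -- initial conditions `S 0 = 1`, `Y 0 = (1 - V)·Γ`, `G 0 = V·Γ`
    (hS0 : ∀ ω, S 0 ω = 1)
    (hY0 : ∀ ω, Y 0 ω = (1 - V ω) * Γ ω)
    (hG0 : ∀ ω, G 0 ω = V ω * Γ ω)
    -- the seminal-curve recursion
    (hYrec : ∀ n ω, Y (n + 1) ω = Y n ω * (1 - Real.sqrt (U n ω)))
    (hSrec : ∀ n ω, 1 / S (n + 1) ω = 1 / S n ω + 4 / (Y n ω) ^ 2 * E n ω)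
    (hGrec : ∀ n ω, G (n + 1) ω = G n ω + Y n ω / S (n + 1) ω * Real.sqrt (U n ω))
    :
    ∀ N : ℕ, 1 ≤ N →
      ∫ ω, (Y N ω) ^ 3 / (G N ω * S N ω) ∂μ ≤ 2 * (6:ℝ) ^ (-((N:ℤ) - 1)) := by
  intro N hN
  obtain ⟨n, rfl⟩ : ∃ n, N = n + 1 := ⟨N - 1, by omega⟩
  have hrec (ω : Ω) : IsSeminalRecursion (U · ω) (E · ω) (Y · ω) (S · ω) (G · ω) :=
    ⟨(hYrec · ω), (hSrec · ω), (hGrec · ω)⟩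
  have hbound : ∀ᵐ ω ∂μ, 0 ≤ Y (n + 1) ω ^ 3 / (G (n + 1) ω * S (n + 1) ω) ∧
      Y (n + 1) ω ^ 3 / (G (n + 1) ω * S (n + 1) ω) ≤ seminalBound U Γ V n ω := by
    filter_upwards
      [ae_all_iff.2 fun k => ae_mem_Ioo_of_map_eq_restrict_Icc (hUm k).aemeasurable (hU k),
      ae_mem_Ioo_of_map_eq_restrict_Icc hVm.aemeasurable hV,
      ae_all_iff.2 fun k => ae_nonneg_of_map_eq_expMeasure (hEm k).aemeasurable (hE k),
      HasRayleighTail.ae_pos hΓ hΓm] with ω hUω hVω hEω hΓω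
    have hy0 : 0 < Y 0 ω := by rw [hY0]; exact mul_pos (sub_pos.2 hVω.2) hΓω
    have hs0 : 0 < S 0 ω := by rw [hS0]; exact one_pos
    have hg0 : 0 ≤ G 0 ω := by rw [hG0]; exact mul_nonneg hVω.1.le hΓω.le
    refine ⟨(hrec ω).pow_three_div_nonneg (fun k => (hUω k).2) hEω hy0 hs0 hg0 _, ?_⟩
    simpa only [seminalBound, hY0] using (hrec ω).pow_three_div_le hUω hEω hy0 hs0 hg0 n
  calc ∫ ω, Y (n + 1) ω ^ 3 / (G (n + 1) ω * S (n + 1) ω) ∂μ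
      ≤ ∫ ω, seminalBound U Γ V n ω ∂μ :=
        integral_mono_of_nonneg (hbound.mono fun _ h => h.1)
          (integrable_seminalBound four_pos hUm hEm hΓm hVm hU hV hΓ hindep n)
          (hbound.mono fun _ h => h.2)
    _ = (1 / 6) ^ n * (1 / 2) * (4 * (1 / 3)) :=
        integral_seminalBound four_pos hUm hEm hΓm hVm hU hV hΓ hindep n
    _ ≤ 2 * 6 ^ (-(((n + 1 : ℕ) : ℤ) - 1)) := by
      have h6 : (0 : ℝ) < 6 ^ n := by positivity
      rw [show -(((n + 1 : ℕ) : ℤ) - 1) = -(n : ℤ) by push_cast; ring, zpow_neg, zpow_natCast,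
        div_pow, one_pow]
      field_simp
      linarith
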